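/- arXiv:0906.2568 — 3 statements merged into one kernel-verified Lean document; each statement's English description precedes it below -/
import Mathlib

section
/- Let (A,B) be a separation of the r-grid W_r (i.e., A∪B = V(W_r) and no edge joins A∖B to B∖A) of order s = |A∩B|, such that B contains all vertices of some cross (the union of a row and a column). Then |A| ≤ s². -/
/-- The `r`-grid. -/
def gridGraph (r : ℕ) : SimpleGraph (Fin r × Fin r) where
  Adj v w := Nat.dist v.1.val w.1.val + Nat.dist v.2.val w.2.val = 1
  symm := by
    constructor
    intro v w h
    simpa [Nat.dist_comm] using h
  loopless := by
    constructor
    intro v h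
    simp [Nat.dist_self] at h

/-- `(A,B)` is a separation of `G`: the two sides cover the vertex set and no
edge joins `A \ B` to `B \ A`. -/
def IsSeparation {V : Type*} [Fintype V] [DecidableEq V]
    (G : SimpleGraph V) (A B : Finset V) : Prop :=
  A ∪ B = Finset.univ ∧
    ∀ a ∈ A, a ∉ B → ∀ b ∈ B, b ∉ A → ¬ G.Adj a b

/-- `B` contains all vertices of some cross (the union of a row and a column). -/
def ContainsCross {r : ℕ} (B : Finset (Fin r × Fin r)) : Prop :=
  ∃ i j : Fin r, ∀ v : Fin r × Fin r, v.1 = i ∨ v.2 = j → v ∈ B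


/-! Walking from a vertex `v ∈ A` along its row to the column of the cross, and along its column
to the row of the cross, goes from `A` to `B`, so each walk meets the separator `A ∩ B`. Hence the
row and the column of `v` both contain a vertex of `A ∩ B`, and `v` is determined by this pair of
separator vertices. -/

namespace IsSeparation

variable {V W : Type*} [Fintype V] [DecidableEq V] [Fintype W] [DecidableEq W]
  {G : SimpleGraph V} {H : SimpleGraph W} {A B : Finset V}

theorem mem_or_mem (h : IsSeparation G A B) (v : V) : v ∈ A ∨ v ∈ B :=
  Finset.mem_union.mp (h.1 ▸ Finset.mem_univ v)

theorem comap (h : IsSeparation G A B) (f : H →g G) :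
    IsSeparation H (Finset.univ.filter (f · ∈ A)) (Finset.univ.filter (f · ∈ B)) := by
  refine ⟨Finset.eq_univ_of_forall fun w => ?_, fun a ha haB b hb hbA hab => ?_⟩
  · simpa [Finset.mem_union] using h.mem_or_mem (f w)
  · simp only [Finset.mem_filter, Finset.mem_univ, true_and] at ha haB hb hbA
    exact h.2 _ ha haB _ hb hbA (f.map_adj hab)

theorem inter_nonempty_of_preconnected (h : IsSeparation G A B) (hG : G.Preconnected)
    {a b : V} (ha : a ∈ A) (hb : b ∈ B) : (A ∩ B).Nonempty := by
  by_cases hbA : b ∈ A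
  · exact ⟨b, Finset.mem_inter.mpr ⟨hbA, hb⟩⟩
  obtain ⟨p⟩ := hG a b
  obtain ⟨d, -, hdA, hdA'⟩ := p.exists_boundary_dart (A : Set V) ha hbA
  have hdB : d.snd ∈ B := (h.mem_or_mem _).resolve_left hdA'
  by_contra hAB
  have hdB' : d.fst ∉ B := fun hfB => hAB ⟨d.fst, Finset.mem_inter.mpr ⟨hdA, hfB⟩⟩
  exact h.2 _ hdA hdB' _ hdB hdA' d.adj

theorem exists_map_mem_inter (h : IsSeparation G A B) (f : H →g G) (hH : H.Preconnected)
    {a b : W} (ha : f a ∈ A) (hb : f b ∈ B) : ∃ c, f c ∈ A ∩ B := by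
  obtain ⟨c, hc⟩ := (h.comap f).inter_nonempty_of_preconnected hH
    ((Finset.mem_filter_univ a).mpr ha) ((Finset.mem_filter_univ b).mpr hb)
  simp only [Finset.mem_inter, Finset.mem_filter_univ] at hc
  exact ⟨c, Finset.mem_inter.mpr hc⟩

end IsSeparation

namespace gridGraph

variable {r : ℕ}

def rowHom (x : Fin r) : SimpleGraph.pathGraph r →g gridGraph r where
  toFun k := (x, k)
  map_rel' hk := by
    rw [SimpleGraph.pathGraph_adj] at hk
    simp only [gridGraph, Nat.dist]
    omega

def colHom (y : Fin r) : SimpleGraph.pathGraph r →g gridGraph r where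
  toFun k := (k, y)
  map_rel' hk := by
    rw [SimpleGraph.pathGraph_adj] at hk
    simp only [gridGraph, Nat.dist]
    omega

end gridGraph

theorem Finset.card_le_card_sq_of_exists_fst_eq_of_exists_snd_eq {α β : Type*} [DecidableEq α]
    [DecidableEq β] {A S : Finset (α × β)} (hfst : ∀ v ∈ A, ∃ p ∈ S, p.1 = v.1)
    (hsnd : ∀ v ∈ A, ∃ q ∈ S, q.2 = v.2) : A.card ≤ S.card ^ 2 := by
  have hsub : A ⊆ S.image Prod.fst ×ˢ S.image Prod.snd := fun v hv =>
    Finset.mem_product.mpr ⟨Finset.mem_image.mpr (hfst v hv), Finset.mem_image.mpr (hsnd v hv)⟩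
  calc A.card ≤ (S.image Prod.fst ×ˢ S.image Prod.snd).card := Finset.card_le_card hsub
    _ = (S.image Prod.fst).card * (S.image Prod.snd).card := Finset.card_product _ _
    _ ≤ S.card * S.card := Nat.mul_le_mul Finset.card_image_le Finset.card_image_le
    _ = S.card ^ 2 := (sq _).symm

/-- If `(A,B)` is a separation of the `r`-grid of order `s = |A ∩ B|` whose side
`B` contains a cross, then `|A| ≤ s²`. -/
theorem small_side_le_order_sq (r : ℕ) (A B : Finset (Fin r × Fin r))
    (hsep : IsSeparation (gridGraph r) A B) (hcross : ContainsCross B) :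
    A.card ≤ (A ∩ B).card ^ 2 := by
  obtain ⟨i, j, hij⟩ := hcross
  have hpath := SimpleGraph.pathGraph_preconnected r
  refine Finset.card_le_card_sq_of_exists_fst_eq_of_exists_snd_eq (fun v hv => ?_) (fun v hv => ?_)
  · obtain ⟨k, hk⟩ := hsep.exists_map_mem_inter (gridGraph.rowHom v.1) hpath (a := v.2) hv
      (hij (v.1, j) (Or.inr rfl))
    exact ⟨(v.1, k), hk, rfl⟩
  · obtain ⟨k, hk⟩ := hsep.exists_map_mem_inter (gridGraph.colHom v.2) hpath (a := v.1) hv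
      (hij (i, v.2) (Or.inl rfl))
    exact ⟨(k, v.2), hk, rfl⟩
end

section
/- Let (A,B) be a separation of the r-grid of order s such that B contains a cross. Let I be the set of row indices meeting A and J the set of column indices meeting A. Then |I| ≤ s and |J| ≤ s. -/
/-!
A row `i` meeting `A`, say in `(i, j)`, also meets `B` in the vertex `(i, j₀)` of the cross.
Walking along the row from `(i, j)` to `(i, j₀)` one must pass through `A ∩ B`, because no edge
joins `A \ B` to `B \ A`. Hence the first projection maps `A ∩ B` onto `I`; columns are symmetric.
-/

open Finset SimpleGraph

namespace IsSeparation

variable {V : Type*} [Fintype V] [DecidableEq V] {G : SimpleGraph V} {A B : Finset V}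

theorem exists_mem_support_inter (hsep : IsSeparation G A B) {u v : V} (p : G.Walk u v)
    (hu : u ∈ A) (hv : v ∈ B) : ∃ w ∈ p.support, w ∈ A ∩ B := by
  induction p with
  | nil => exact ⟨_, Walk.start_mem_support _, mem_inter.2 ⟨hu, hv⟩⟩
  | @cons u w v hadj p ih =>
    by_cases huB : u ∈ B
    · exact ⟨u, Walk.start_mem_support _, mem_inter.2 ⟨hu, huB⟩⟩
    have hwA : w ∈ A := by
      by_contra hwA
      have hwB : w ∈ B := (mem_union.1 (hsep.1 ▸ mem_univ w)).resolve_left hwA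
      exact hsep.2 u hu huB w hwB hwA hadj
    obtain ⟨x, hx, hxAB⟩ := ih hwA hv
    exact ⟨x, Walk.support_cons _ _ ▸ List.mem_cons_of_mem _ hx, hxAB⟩

theorem exists_hom_mem_inter {W : Type*} {H : SimpleGraph W} (hsep : IsSeparation G A B)
    (hH : H.Preconnected) (φ : H →g G) {x y : W} (hx : φ x ∈ A) (hy : φ y ∈ B) :
    ∃ z, φ z ∈ A ∩ B := by
  obtain ⟨p⟩ := hH x y
  obtain ⟨w, hw, hwAB⟩ := hsep.exists_mem_support_inter (p.map φ) hx hy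
  rw [Walk.support_map, List.mem_map] at hw
  obtain ⟨z, -, rfl⟩ := hw
  exact ⟨z, hwAB⟩

end IsSeparation

theorem gridGraph_adj_iff_of_fst_eq {r : ℕ} (i : Fin r) (j k : Fin r) :
    (gridGraph r).Adj (i, j) (i, k) ↔ (pathGraph r).Adj j k := by
  simp only [gridGraph, pathGraph_adj, Nat.dist]
  omega

theorem gridGraph_adj_iff_of_snd_eq {r : ℕ} (j : Fin r) (i k : Fin r) :
    (gridGraph r).Adj (i, j) (k, j) ↔ (pathGraph r).Adj i k := by
  simp only [gridGraph, pathGraph_adj, Nat.dist]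
  omega

def gridRowHom {r : ℕ} (i : Fin r) : pathGraph r →g gridGraph r where
  toFun j := (i, j)
  map_rel' := (gridGraph_adj_iff_of_fst_eq i _ _).2

def gridColHom {r : ℕ} (j : Fin r) : pathGraph r →g gridGraph r where
  toFun i := (i, j)
  map_rel' := (gridGraph_adj_iff_of_snd_eq j _ _).2

/-- For a separation `(A,B)` of the `r`-grid of order `s` whose big side
contains a cross, the set `I` of row indices meeting `A` and the set `J` of
column indices meeting `A` both have size at most `s`. -/
theorem rows_and_cols_meeting_small_side (r : ℕ) (A B : Finset (Fin r × Fin r))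
    (hsep : IsSeparation (gridGraph r) A B) (hcross : ContainsCross B) :
    (Finset.univ.filter fun i : Fin r => ∃ j : Fin r, (i, j) ∈ A).card ≤ (A ∩ B).card ∧
    (Finset.univ.filter fun j : Fin r => ∃ i : Fin r, (i, j) ∈ A).card ≤ (A ∩ B).card := by
  obtain ⟨i₀, j₀, hcross⟩ := hcross
  constructor
  · refine card_le_card_of_surjOn Prod.fst fun i hi ↦ ?_
    obtain ⟨j, hj⟩ := (mem_filter.1 hi).2
    obtain ⟨k, hk⟩ := hsep.exists_hom_mem_inter (pathGraph_preconnected r) (gridRowHom i)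
      (x := j) hj (hcross _ (Or.inr rfl))
    exact ⟨_, hk, rfl⟩
  · refine card_le_card_of_surjOn Prod.snd fun j hj ↦ ?_
    obtain ⟨i, hi⟩ := (mem_filter.1 hj).2
    obtain ⟨k, hk⟩ := hsep.exists_hom_mem_inter (pathGraph_preconnected r) (gridColHom j)
      (x := i) hi (hcross _ (Or.inl rfl))
    exact ⟨_, hk, rfl⟩
end

section
/- Let G₀ be a graph with N = |V(G₀)| vertices and M = ‖G₀‖ edges satisfying 3M < 9(N + ask) (the sparsity from embeddability) where a,s,k are positive integers. Partition V(G₀) into sets X, Y, Z with |X| = x, |Y| = y, |Z| = z. Suppose every vertex of Y has degree ≥ 7 in G₀, and at least z − g vertices of Z have degree ≥ 14(a+1) in G₀, for some g ≥ 0. Then (6/7)(N + ask) > N − x − 2(a+1)g; equivalently x > N/7 − 2(a+1)g − (6/7)ask. -/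
/-- Degree-counting step in the wide-vortex argument.  Let `G₀` be a graph with
`N` vertices and `M` edges, `M < 3(N + ask)` (from embeddability in a surface
of Euler genus `< ask`).  Partition the vertices into essential society
vertices `X`, non-essential society vertices `Y` and non-society vertices `Z`.
If every vertex of `Y` has degree at least `7` and at least `|Z| - g` vertices
of `Z` have degree at least `14(a+1)`, then
`(6/7)(N + ask) > N - |X| - 2(a+1)g`. -/
theorem wide_vortex_counting {V : Type*} [Fintype V] [DecidableEq V]
    (G : SimpleGraph V) [DecidableRel G.Adj]
    (a s k g : ℕ) (ha : 0 < a) (hs : 0 < s) (hk : 0 < k)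
    (X Y Z : Finset V)
    (hcover : X ∪ Y ∪ Z = Finset.univ)
    (hXY : Disjoint X Y) (hXZ : Disjoint X Z) (hYZ : Disjoint Y Z)
    (hM : (G.edgeFinset.card : ℚ) < 3 * ((Fintype.card V : ℚ) + a * s * k))
    (hY : ∀ v ∈ Y, 7 ≤ G.degree v)
    (hZ : (Z.card : ℚ) - g ≤ (Z.filter fun v => 14 * (a + 1) ≤ G.degree v).card) :
    (6 / 7 : ℚ) * ((Fintype.card V : ℚ) + a * s * k) >
      (Fintype.card V : ℚ) - X.card - 2 * (a + 1) * g := by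
  classical
  set Zf := Z.filter fun v => 14 * (a + 1) ≤ G.degree v with hZf
  -- cardinality of the partition
  have hNcard : (Fintype.card V : ℚ) = X.card + Y.card + Z.card := by
    have h := congrArg Finset.card hcover
    rw [Finset.card_union_of_disjoint (Finset.disjoint_union_left.2 ⟨hXZ, hYZ⟩),
      Finset.card_union_of_disjoint hXY, Finset.card_univ] at h
    push_cast [← h]; ring
  -- degree sum bound
  have hYZf : Disjoint Y Zf := hYZ.mono_right (Finset.filter_subset _ _)
  have hsum : 7 * Y.card + 14 * (a + 1) * Zf.card ≤ ∑ v, G.degree v := by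
    calc 7 * Y.card + 14 * (a + 1) * Zf.card
        ≤ (∑ v ∈ Y, G.degree v) + ∑ v ∈ Zf, G.degree v := by
          gcongr
          · calc 7 * Y.card = Y.card * 7 := by ring
              _ ≤ ∑ v ∈ Y, G.degree v := Finset.card_nsmul_le_sum Y _ 7 hY
          · calc 14 * (a + 1) * Zf.card = Zf.card * (14 * (a + 1)) := by ring
              _ ≤ ∑ v ∈ Zf, G.degree v :=
                Finset.card_nsmul_le_sum Zf _ _ (fun v hv => (Finset.mem_filter.mp hv).2)
        _ = ∑ v ∈ Y ∪ Zf, G.degree v := (Finset.sum_union hYZf).symm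
        _ ≤ ∑ v, G.degree v :=
          Finset.sum_le_sum_of_subset (Finset.subset_univ _)
  rw [G.sum_degrees_eq_twice_card_edges] at hsum
  have hsumQ : (7 : ℚ) * Y.card + 14 * (a + 1) * Zf.card ≤ 2 * G.edgeFinset.card := by
    exact_mod_cast hsum
  have haQ : (1 : ℚ) ≤ a := by exact_mod_cast ha
  have hZnn : (0 : ℚ) ≤ Z.card := Nat.cast_nonneg _
  have hgnn : (0 : ℚ) ≤ g := Nat.cast_nonneg _
  nlinarith [mul_le_mul_of_nonneg_left hZ (by positivity : (0:ℚ) ≤ 14 * (a + 1)),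
    mul_nonneg (by linarith : (0:ℚ) ≤ 2*(a:ℚ)+1) hZnn]
end
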